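/- arXiv:2511.02745 — 4 statements merged into one kernel-verified Lean document; each statement's English description precedes it below -/
import Mathlib

section
/- As x → ∞, ∑_{n ≤ x} Λ(n)/n = log x + O(1); that is, there exists a constant C > 0 such that for all real x ≥ 2, |∑_{n ≤ x} Λ(n)/n − log x| ≤ C. -/
/-!
Since `Λ * ζ = log`, we have `log ⌊x⌋! = ∑_{n ≤ x} Λ(n) ⌊x/n⌋`, which differs from
`x ∑_{n ≤ x} Λ(n)/n` by at most `ψ(x) = O(x)` (Chebyshev). Stirling's bound gives
`log ⌊x⌋! = x log x + O(x)`, and dividing by `x` yields the claim.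
-/

open ArithmeticFunction

open Finset Chebyshev

theorem mul_log_sub_mul_log_le {a b : ℝ} (ha : 0 < a) (hab : a ≤ b) :
    b * Real.log b - a * Real.log a ≤ (b - a) * (Real.log b + 1) := by
  have hb : 0 < b := ha.trans_le hab
  have hlog : Real.log (b / a) ≤ b / a - 1 := Real.log_le_sub_one_of_pos (by positivity)
  rw [Real.log_div hb.ne' ha.ne'] at hlog
  have : a * (Real.log b - Real.log a) ≤ b - a := by
    calc a * (Real.log b - Real.log a) ≤ a * (b / a - 1) := by gcongr
      _ = b - a := by field_simp
  linarith

theorem sum_Ioc_log_eq_sum_vonMangoldt_mul_div (N : ℕ) :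
    ∑ n ∈ Ioc 0 N, Real.log n = ∑ n ∈ Ioc 0 N, Λ n * (N / n : ℕ) := by
  rw [← sum_Ioc_mul_zeta_eq_sum, vonMangoldt_mul_zeta]
  rfl

theorem sum_Ioc_log_eq_log_factorial (N : ℕ) :
    ∑ n ∈ Ioc 0 N, Real.log n = Real.log N.factorial := by
  have hne : ∀ n ∈ Ioc 0 N, (n : ℝ) ≠ 0 := fun n hn =>
    Nat.cast_ne_zero.2 (mem_Ioc.1 hn).1.ne'
  rw [← Real.log_prod hne, ← Nat.cast_prod, ← Finset.Icc_add_one_left_eq_Ioc, zero_add,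
    ← Finset.prod_Ico_id_eq_factorial]
  rfl

theorem self_mul_log_sub_self_le_sum_Ioc_log (N : ℕ) :
    N * Real.log N - N ≤ ∑ n ∈ Ioc 0 N, Real.log n := by
  rcases eq_or_ne N 0 with rfl | hN
  · simp
  have hStirling := Stirling.le_log_factorial_stirling hN
  have : 0 ≤ Real.log N := Real.log_natCast_nonneg N
  have : 0 ≤ Real.log (2 * Real.pi) := Real.log_nonneg (by linarith [Real.pi_gt_three])
  rw [sum_Ioc_log_eq_log_factorial]
  linarith

theorem sum_Ioc_log_le_self_mul_log (N : ℕ) :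
    ∑ n ∈ Ioc 0 N, Real.log n ≤ N * Real.log N := by
  calc ∑ n ∈ Ioc 0 N, Real.log n ≤ ∑ _n ∈ Ioc 0 N, Real.log N := by
        refine sum_le_sum fun n hn => ?_
        simp only [mem_Ioc] at hn
        exact Real.log_le_log (by exact_mod_cast hn.1) (by exact_mod_cast hn.2)
    _ = N * Real.log N := by simp

theorem sum_Ioc_floor_log_le {x : ℝ} (hx : 1 ≤ x) :
    ∑ n ∈ Ioc 0 ⌊x⌋₊, Real.log n ≤ x * Real.log x := by
  have hNx : (⌊x⌋₊ : ℝ) ≤ x := Nat.floor_le (by linarith)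
  have hN : (1 : ℝ) ≤ ⌊x⌋₊ := by exact_mod_cast (Nat.one_le_floor_iff x).2 hx
  calc ∑ n ∈ Ioc 0 ⌊x⌋₊, Real.log n ≤ ⌊x⌋₊ * Real.log ⌊x⌋₊ :=
        sum_Ioc_log_le_self_mul_log _
    _ ≤ x * Real.log x := by gcongr

theorem mul_log_sub_two_mul_le_sum_Ioc_floor_log {x : ℝ} (hx : 1 ≤ x) :
    x * Real.log x - 2 * x ≤ ∑ n ∈ Ioc 0 ⌊x⌋₊, Real.log n := by
  set N := ⌊x⌋₊
  have hN : (1 : ℝ) ≤ N := by exact_mod_cast (Nat.one_le_floor_iff x).2 hx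
  have hNx : (N : ℝ) ≤ x := Nat.floor_le (by linarith)
  have hxN : x - N ≤ 1 := by linarith [Nat.lt_floor_add_one x]
  have hlog : Real.log x + 1 ≤ x := by linarith [Real.log_le_sub_one_of_pos (by linarith : 0 < x)]
  have hlog0 : 0 ≤ Real.log x + 1 := by linarith [Real.log_nonneg hx]
  have hconvex := mul_log_sub_mul_log_le (by linarith) hNx
  have : (x - N) * (Real.log x + 1) ≤ x := by nlinarith
  linarith [self_mul_log_sub_self_le_sum_Ioc_log N]

theorem sum_Ioc_log_le_mul_sum_vonMangoldt_div {x : ℝ} (hx : 0 ≤ x) :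
    ∑ n ∈ Ioc 0 ⌊x⌋₊, Real.log n ≤ x * ∑ n ∈ Ioc 0 ⌊x⌋₊, Λ n / n := by
  rw [sum_Ioc_log_eq_sum_vonMangoldt_mul_div, mul_sum]
  refine sum_le_sum fun n _ => ?_
  rw [← Nat.floor_div_natCast, mul_div_left_comm]
  exact mul_le_mul_of_nonneg_left (Nat.floor_le (by positivity)) vonMangoldt_nonneg

theorem mul_sum_vonMangoldt_div_le_sum_Ioc_log_add_psi (x : ℝ) :
    x * ∑ n ∈ Ioc 0 ⌊x⌋₊, Λ n / n ≤ ∑ n ∈ Ioc 0 ⌊x⌋₊, Real.log n + ψ x := by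
  rw [sum_Ioc_log_eq_sum_vonMangoldt_mul_div, psi, mul_sum, ← sum_add_distrib]
  refine sum_le_sum fun n _ => ?_
  rw [← Nat.floor_div_natCast, mul_div_left_comm, ← mul_add_one]
  exact mul_le_mul_of_nonneg_left (Nat.lt_floor_add_one _).le vonMangoldt_nonneg

theorem sum_vonMangoldt_div_eq_log_add_bigO :
    ∃ C > 0, ∀ x : ℝ, 2 ≤ x →
      |(∑ n ∈ Finset.Icc 1 ⌊x⌋₊, (Λ n : ℝ) / n) - Real.log x| ≤ C := by
  refine ⟨Real.log 4 + 4, by positivity, fun x hx => ?_⟩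
  have hx0 : 0 < x := by linarith
  rw [show Icc 1 ⌊x⌋₊ = Ioc 0 ⌊x⌋₊ from Finset.Icc_add_one_left_eq_Ioc 0 _]
  set S := ∑ n ∈ Ioc 0 ⌊x⌋₊, Λ n / n
  have hlower : x * (Real.log x - 2) ≤ x * S := by
    linarith [mul_log_sub_two_mul_le_sum_Ioc_floor_log (by linarith : 1 ≤ x),
      sum_Ioc_log_le_mul_sum_vonMangoldt_div hx0.le]
  have hupper : x * S ≤ x * (Real.log x + (Real.log 4 + 4)) := by
    linarith [mul_sum_vonMangoldt_div_le_sum_Ioc_log_add_psi x,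
      sum_Ioc_floor_log_le (by linarith : 1 ≤ x), psi_le_const_mul_self hx0.le]
  have hlog4 : 0 ≤ Real.log 4 := by positivity
  rw [abs_le]
  constructor
  · linarith [le_of_mul_le_mul_left hlower hx0]
  · linarith [le_of_mul_le_mul_left hupper hx0]
end

section
/- For every positive integer n, ∑_{n < p ≤ 2n} log p ≤ 2n · log 2, where the sum is over primes p in (n, 2n]. -/
open Finset

namespace Nat

-- A prime `p ∈ (n, 2n]` divides `(2n)!` but not `n! ^ 2`.
theorem prod_primes_Ioc_dvd_centralBinom (n : ℕ) :
    ∏ p ∈ (Ioc n (2 * n)).filter Nat.Prime, p ∣ centralBinom n := by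
  rw [centralBinom_eq_two_mul_choose]
  refine prod_primes_dvd _ (fun p hp ↦ (mem_filter.1 hp).2.prime) fun p hp ↦ ?_
  rw [mem_filter, mem_Ioc] at hp
  exact hp.2.dvd_choose hp.1.1 (by omega) hp.1.2

theorem prod_primes_Ioc_le_four_pow (n : ℕ) :
    ∏ p ∈ (Ioc n (2 * n)).filter Nat.Prime, p ≤ 4 ^ n :=
  (le_of_dvd (centralBinom_pos n) (prod_primes_Ioc_dvd_centralBinom n)).trans
    (centralBinom_le_four_pow n)

end Nat

theorem sum_log_primes_Ioc_le_general (n : ℕ) :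
    ∑ p ∈ (Finset.Ioc n (2 * n)).filter Nat.Prime, Real.log p
      ≤ 2 * n * Real.log 2 := by
  have hprimes_pos : ∀ p ∈ (Ioc n (2 * n)).filter Nat.Prime, (0 : ℝ) < p :=
    fun p hp ↦ mod_cast (mem_filter.1 hp).2.pos
  calc ∑ p ∈ (Ioc n (2 * n)).filter Nat.Prime, Real.log p
      = Real.log (∏ p ∈ (Ioc n (2 * n)).filter Nat.Prime, (p : ℝ)) :=
        (Real.log_prod fun p hp ↦ (hprimes_pos p hp).ne').symm
    _ ≤ Real.log ((4 : ℝ) ^ n) :=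
        Real.log_le_log (prod_pos hprimes_pos) <| by
          rw [← Nat.cast_prod]
          exact_mod_cast Nat.prod_primes_Ioc_le_four_pow n
    _ = 2 * n * Real.log 2 := by
        rw [Real.log_pow, show (4 : ℝ) = 2 ^ 2 by norm_num, Real.log_pow]
        push_cast
        ring

theorem sum_log_primes_Ioc_le (n : ℕ) (hn : 0 < n) :
    ∑ p ∈ (Finset.Ioc n (2 * n)).filter Nat.Prime, Real.log p
      ≤ 2 * n * Real.log 2 :=
  sum_log_primes_Ioc_le_general n
end

section
/- There exists a constant c > 0 such that for all real x ≥ 1, Ψ(x) ≤ c·x, where Ψ(x) = ∑_{n ≤ x} Λ(n) is the second Chebyshev function. -/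
open ArithmeticFunction

theorem chebyshev_psi_le_linear :
    ∃ c > 0, ∀ x : ℝ, 1 ≤ x →
      (∑ n ∈ Finset.Icc 1 ⌊x⌋₊, (Λ n : ℝ)) ≤ c * x := by
  refine ⟨Real.log 4 + 4, by positivity, fun x hx => ?_⟩
  have psi_eq : Chebyshev.psi x = ∑ n ∈ Finset.Icc 1 ⌊x⌋₊, (Λ n : ℝ) := by
    rw [Chebyshev.psi, ← Finset.Icc_add_one_left_eq_Ioc, zero_add]
  exact psi_eq ▸ Chebyshev.psi_le_const_mul_self (by linarith)
end

section
/- For every integer n ≥ 3, π(n) ≤ e·n / log n, where π is the prime counting function and e is Euler's number. -/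
open Finset Nat

lemma factorial_card_le_prod (S : Finset ℕ) (h0 : 0 ∉ S) :
    (S.card)! ≤ ∏ i ∈ S, i := by
  induction S using Finset.strongInduction with
  | _ S ih =>
    rcases S.eq_empty_or_nonempty with rfl | hS
    · simp
    · set m := S.max' hS with hm
      have hmem : m ∈ S := S.max'_mem hS
      have hsub : S ⊆ Finset.Icc 1 m := by
        intro x hx
        refine Finset.mem_Icc.mpr ⟨?_, S.le_max' x hx⟩
        rcases Nat.eq_zero_or_pos x with rfl | h; · exact absurd hx h0
        exact h
      have hcard : S.card ≤ m := by
        have := Finset.card_le_card hsub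
        simpa using this
      have herase := ih (S.erase m) (Finset.erase_ssubset hmem)
        (fun h => h0 (Finset.mem_of_mem_erase h))
      calc (S.card)! = S.card * (S.card - 1)! := by
            rw [← Nat.succ_pred_eq_of_pos (Finset.card_pos.mpr hS)]
            rw [Nat.factorial_succ]; simp
        _ ≤ m * ∏ i ∈ S.erase m, i := by
            apply Nat.mul_le_mul hcard
            rw [← Finset.card_erase_of_mem hmem] at *
            exact herase
        _ = ∏ i ∈ S, i := Finset.mul_prod_erase S (fun i => i) hmem

lemma factorial_pi_le (n : ℕ) : (Nat.primeCounting n)! ≤ 4 ^ n := by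
  have h1 : Nat.primeCounting n = ((n+1).primesBelow).card := by
    rw [Nat.primesBelow_card_eq_primeCounting']
    rfl
  have h2 : ((n+1).primesBelow).card ! ≤ ∏ p ∈ (n+1).primesBelow, p := by
    apply factorial_card_le_prod
    intro h
    exact Nat.not_prime_zero (Nat.prime_of_mem_primesBelow h)
  have h3 : ∏ p ∈ (n+1).primesBelow, p = primorial n := by
    rw [primorial, Nat.primesBelow]
  rw [h1]
  exact h2.trans (h3 ▸ primorial_le_4_pow n)

theorem primeCounting_le (n : ℕ) (hn : 3 ≤ n) :
    (Nat.primeCounting n : ℝ) ≤ Real.exp 1 * n / Real.log n := by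
  set k := Nat.primeCounting n with hk
  by_contra hcon
  push_neg at hcon
  have hn3 : (3:ℝ) ≤ n := by exact_mod_cast hn
  have hlogn : 1 < Real.log n := by
    have : Real.exp 1 < 3 := by
      have := Real.exp_one_lt_d9; linarith
    calc 1 = Real.log (Real.exp 1) := (Real.log_exp 1).symm
      _ < Real.log n := Real.log_lt_log (Real.exp_pos 1) (lt_of_lt_of_le this hn3)
  have hlogpos : 0 < Real.log n := by linarith
  have hnpos : (0:ℝ) < n := by linarith
  set x : ℝ := Real.exp 1 * n / Real.log n with hx
  have hxpos : 0 < x := by positivity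
  -- x ≥ e since log n ≤ n
  have hlog_le : Real.log n ≤ n := (Real.log_le_sub_one_of_pos hnpos).trans (by linarith)
  have hxe : Real.exp 1 ≤ x := by
    rw [hx, le_div_iff₀ hlogpos]
    have := Real.exp_pos 1
    nlinarith
  -- key inequality: k^k ≤ exp(k) * 4^n
  have hfac : ((k)! : ℝ) ≤ 4 ^ n := by exact_mod_cast factorial_pi_le n
  have hpow : (k:ℝ) ^ k ≤ Real.exp k * 4 ^ n := by
    have h := Real.pow_div_factorial_le_exp (x := (k:ℝ)) (Nat.cast_nonneg k) k
    have hfacpos : (0:ℝ) < (k)! := by exact_mod_cast Nat.factorial_pos k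
    rw [div_le_iff₀ hfacpos] at h
    calc (k:ℝ)^k ≤ Real.exp k * (k)! := h
      _ ≤ Real.exp k * 4 ^ n := by
          apply mul_le_mul_of_nonneg_left hfac (Real.exp_pos _).le
  -- take logs: k * log k ≤ k + n * log 4
  have hkx : x < k := hcon
  have hkpos : 0 < (k:ℝ) := lt_trans hxpos hkx
  have hlogk : k * Real.log k ≤ k + n * Real.log 4 := by
    have h := Real.log_le_log (by positivity) hpow
    rw [Real.log_pow, Real.log_mul (Real.exp_pos _).ne' (by positivity),
        Real.log_exp, Real.log_pow] at h
    exact_mod_cast h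
  -- but k * (log k - 1) > x * (log x - 1) ≥ n * (e - 1) > n * log 4
  have hlogx : 1 ≤ Real.log x := by
    calc 1 = Real.log (Real.exp 1) := (Real.log_exp 1).symm
      _ ≤ Real.log x := Real.log_le_log (Real.exp_pos 1) hxe
  have hlogkx : Real.log x < Real.log k := Real.log_lt_log hxpos hkx
  have hmono : x * (Real.log x - 1) < k * (Real.log k - 1) := by
    nlinarith
  have hxval : Real.log x = 1 + Real.log n - Real.log (Real.log n) := by
    rw [hx, Real.log_div (by positivity) hlogpos.ne', Real.log_mul (Real.exp_pos 1).ne' hnpos.ne',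
        Real.log_exp]
  -- log (log n) ≤ log n / e
  have hloglog : Real.log (Real.log n) ≤ Real.log n / Real.exp 1 := by
    have h := Real.log_le_sub_one_of_pos (show 0 < Real.log n / Real.exp 1 by positivity)
    rw [Real.log_div hlogpos.ne' (Real.exp_pos 1).ne', Real.log_exp] at h
    linarith
  have hxlb : n * (Real.exp 1 - 1) ≤ x * (Real.log x - 1) := by
    rw [hxval, hx, div_mul_eq_mul_div, le_div_iff₀ hlogpos]
    have h2 : Real.log (Real.log n) * Real.exp 1 ≤ Real.log n :=
      (le_div_iff₀ (Real.exp_pos 1)).mp hloglog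
    nlinarith [mul_le_mul_of_nonneg_left h2 hnpos.le, Real.exp_pos 1]
  have hlog4 : Real.log 4 < Real.exp 1 - 1 := by
    have h2 : Real.log 4 = 2 * Real.log 2 := by
      rw [show (4:ℝ) = 2 ^ 2 by norm_num, Real.log_pow]; norm_num
    have := Real.log_two_lt_d9
    have := Real.exp_one_gt_d9
    rw [h2]; linarith
  have hfin : k * (Real.log k - 1) ≤ n * Real.log 4 := by nlinarith [hlogk]
  have : n * Real.log 4 < n * (Real.exp 1 - 1) :=
    (mul_lt_mul_iff_right₀ hnpos).mpr hlog4
  linarith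
end
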